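/- arXiv:2109.05638 — 7 statements merged into one kernel-verified Lean document; each statement's English description precedes it below -/
import Mathlib

section
/- Let h > 0, K ≤ 0, σ ∈ ℝ, and λ = 12 − K h². Consider the boundary-stencil coefficient array for Helmholtz-Robin: α matrix (1/(λh²)) · [[8, 4], [4σKh³ + λKh² − 24σh − 40, 16], [8, 4]] indexed by (i_k ∈ {0,1}, j_k ∈ {−1,0,1}) with the center value α_{0,0} = (4σKh³ + λKh² − 24σh − 40)/(λh²). Then if K ≤ 0 and σ ≥ 0, the off-center coefficients are all nonnegative, the center coefficient is negative, and the sum of all six α coefficients equals K + σ·(4Kh²−24)/(λh). -/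
/-- Sign structure and row-sum identity for the Helmholtz–Robin boundary stencil. -/
theorem helmholtz_robin_boundary_stencil_signs (h K σ lam : ℝ)
    (hh : 0 < h) (hK : K ≤ 0) (hσ : 0 ≤ σ) (hlam : lam = 12 - K * h ^ 2) :
    0 ≤ 8 / (lam * h ^ 2) ∧ 0 ≤ 4 / (lam * h ^ 2) ∧ 0 ≤ 16 / (lam * h ^ 2) ∧
    (4 * σ * K * h ^ 3 + lam * K * h ^ 2 - 24 * σ * h - 40) / (lam * h ^ 2) < 0 ∧
    2 * (8 / (lam * h ^ 2)) + 2 * (4 / (lam * h ^ 2)) + 16 / (lam * h ^ 2)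
        + (4 * σ * K * h ^ 3 + lam * K * h ^ 2 - 24 * σ * h - 40) / (lam * h ^ 2)
      = K + σ * ((4 * K * h ^ 2 - 24) / (lam * h)) := by
  have hlam0 : 0 < lam := by nlinarith [sq_nonneg h]
  have hden : 0 < lam * h ^ 2 := by positivity
  refine ⟨by positivity, by positivity, by positivity, ?_, ?_⟩
  · apply div_neg_of_neg_of_pos _ hden
    nlinarith [mul_nonneg hσ hh.le, pow_pos hh 3, mul_nonneg (mul_nonneg hσ (neg_nonneg.2 hK)) (pow_pos hh 3).le]
  · have hh' : h ≠ 0 := hh.ne'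
    have hl' : lam ≠ 0 := hlam0.ne'
    field_simp
    subst hlam
    ring
end

section
/- Exactness of the Helmholtz-Robin boundary stencil on quadratic polynomials: Let h > 0, K, σ ∈ ℝ with λ = 12 − Kh² ≠ 0. Let u be any polynomial of total degree at most 2, f = Δu + Ku, and g(y) = −u_x(0,y) + σ u(0,y). Then Σ α_{i_k,j_k} u(i_k h, y + j_k h) = Σ β_{i_k,j_k} f(i_k h, y + j_k h) + γ₀ g(y), where the α, β, γ coefficients are those of equations (2.17)–(2.18) of the scheme: α = (1/(λh²))[[8,4],[4σKh³+λKh²−24σh−40, 16],[8,4]], β = (1/λ)[[0,1,0],[−1, 8−Kh², 3],[0,1,0]], γ₀ = (4Kh²−24)/(λh). -/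
noncomputable def pdx (u : ℝ → ℝ → ℝ) : ℝ → ℝ → ℝ := fun x y => deriv (fun s => u s y) x
noncomputable def pdy (u : ℝ → ℝ → ℝ) : ℝ → ℝ → ℝ := fun x y => deriv (fun t => u x t) y

/-!
A polynomial of degree at most two has constant Laplacian `2 (c₂₀ + c₀₂)` and an affine
derivative `u_x`, so after substituting these into `f` and `g` both sides of the stencil identity
are explicit in the six coefficients of `u`, and the identity becomes a polynomial one once the
denominators `λ` and `h` are cleared.
-/

theorem deriv_quadratic (a b c x : ℝ) :
    deriv (fun s => a + b * s + c * s ^ 2) x = b + 2 * c * x := by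
  have := (((hasDerivAt_id x).const_mul b).const_add a).add ((hasDerivAt_pow 2 x).const_mul c)
  exact (this.congr_deriv (by ring)).deriv

def bivariateQuadratic (c : ℕ → ℕ → ℝ) (x y : ℝ) : ℝ :=
  c 0 0 + c 1 0 * x + c 0 1 * y + c 2 0 * x ^ 2 + c 1 1 * x * y + c 0 2 * y ^ 2

theorem sum_degree_le_two_eq_bivariateQuadratic (c : ℕ → ℕ → ℝ) (x y : ℝ) :
    ∑ k₁ ∈ Finset.range 3, ∑ k₂ ∈ Finset.range 3,
        (if k₁ + k₂ ≤ 2 then c k₁ k₂ * x ^ k₁ * y ^ k₂ else 0) = bivariateQuadratic c x y := by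
  simp only [Finset.sum_range_succ, Finset.sum_range_zero]
  norm_num [bivariateQuadratic]
  ring

theorem pdx_bivariateQuadratic (c : ℕ → ℕ → ℝ) :
    pdx (bivariateQuadratic c) = fun x y => c 1 0 + c 1 1 * y + 2 * c 2 0 * x := by
  ext x y
  have slice : (fun s => bivariateQuadratic c s y) =
      fun s => (c 0 0 + c 0 1 * y + c 0 2 * y ^ 2) + (c 1 0 + c 1 1 * y) * s + c 2 0 * s ^ 2 := by
    ext s
    unfold bivariateQuadratic
    ring
  rw [pdx, slice, deriv_quadratic]

theorem pdy_bivariateQuadratic (c : ℕ → ℕ → ℝ) :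
    pdy (bivariateQuadratic c) = fun x y => c 0 1 + c 1 1 * x + 2 * c 0 2 * y := by
  ext x y
  have slice : (fun t => bivariateQuadratic c x t) =
      fun t => (c 0 0 + c 1 0 * x + c 2 0 * x ^ 2) + (c 0 1 + c 1 1 * x) * t + c 0 2 * t ^ 2 := by
    ext t
    unfold bivariateQuadratic
    ring
  rw [pdy, slice, deriv_quadratic]

theorem laplacian_bivariateQuadratic (c : ℕ → ℕ → ℝ) (x y : ℝ) :
    pdx (pdx (bivariateQuadratic c)) x y + pdy (pdy (bivariateQuadratic c)) x y
      = 2 * c 2 0 + 2 * c 0 2 := by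
  rw [pdx_bivariateQuadratic, pdy_bivariateQuadratic]
  simp [pdx, pdy]

/-- Exactness of the Helmholtz–Robin boundary stencil on polynomials of total degree ≤ 2,
with `f = Δu + K u` and `g(y) = −u_x(0,y) + σ u(0,y)`. -/
theorem helmholtz_robin_boundary_stencil_exact_on_quadratics
    (u : ℝ → ℝ → ℝ) (c : ℕ → ℕ → ℝ)
    (hu : ∀ x y : ℝ, u x y =
      ∑ k₁ ∈ Finset.range 3, ∑ k₂ ∈ Finset.range 3,
        if k₁ + k₂ ≤ 2 then c k₁ k₂ * x ^ k₁ * y ^ k₂ else 0)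
    (K σ h lam : ℝ) (hh : 0 < h) (hlam : lam = 12 - K * h ^ 2) (hne : lam ≠ 0)
    (f : ℝ → ℝ → ℝ)
    (hf : ∀ x y : ℝ, f x y = pdx (pdx u) x y + pdy (pdy u) x y + K * u x y)
    (g : ℝ → ℝ) (hg : ∀ y : ℝ, g y = -pdx u 0 y + σ * u 0 y)
    (y : ℝ) :
    (1 / (lam * h ^ 2)) *
        (8 * u 0 (y - h) + 4 * u h (y - h)
          + (4 * σ * K * h ^ 3 + lam * K * h ^ 2 - 24 * σ * h - 40) * u 0 y
          + 16 * u h y + 8 * u 0 (y + h) + 4 * u h (y + h))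
      = (1 / lam) *
          (f 0 (y - h) + f 0 (y + h) - f (-h) y + (8 - K * h ^ 2) * f 0 y + 3 * f h y)
        + ((4 * K * h ^ 2 - 24) / (lam * h)) * g y := by
  obtain rfl : u = bivariateQuadratic c := by
    ext x y
    rw [hu, sum_degree_le_two_eq_bivariateQuadratic]
  have hh : h ≠ 0 := hh.ne'
  -- the Laplacian first, before `pdx_bivariateQuadratic` rewrites inside it
  simp only [hf, hg, laplacian_bivariateQuadratic]
  simp only [pdx_bivariateQuadratic]
  subst hlam
  field_simp
  unfold bivariateQuadratic
  ring
end

section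
/- Exactness of the super-third boundary stencil on cubic polynomials: Let h > 0 and λ = 6. Let u be any polynomial of total degree at most 3, f = Δu, and g(y) = −u_x(0,y). Then (1/(6h²))[(4)u(0,y−h) + 2u(h,y−h) − 20u(0,y) + 8u(h,y) + 4u(0,y+h) + 2u(h,y+h)] = (1/6)[4 f(0,y) + 2 f(h,y)] − (2/h) g(y). -/
/-! Expand `u` as a cubic in `x` (and, regrouped, in `y`) with coefficients polynomial in the
other variable, differentiate term by term, and the stencil identity becomes a polynomial
identity in `y`, `h`, `h⁻¹` and the ten coefficients of `u`. -/

theorem hasDerivAt_cubic (a b c d x : ℝ) :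
    HasDerivAt (fun s => a + b * s + c * s ^ 2 + d * s ^ 3)
      (b + 2 * c * x + 3 * d * x ^ 2) x := by
  refine ((((hasDerivAt_const x a).add ((hasDerivAt_id x).const_mul b)).add
    ((hasDerivAt_pow 2 x).const_mul c)).add ((hasDerivAt_pow 3 x).const_mul d)).congr_deriv ?_
  simp only [Nat.cast_ofNat]
  ring

section CubicInOneVariable

variable {u : ℝ → ℝ → ℝ} {a b c d : ℝ → ℝ}

theorem pdx_of_cubic_in_x (hu : ∀ x y, u x y = a y + b y * x + c y * x ^ 2 + d y * x ^ 3)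
    (x y : ℝ) : pdx u x y = b y + 2 * c y * x + 3 * d y * x ^ 2 := by
  simp only [pdx, hu]
  exact (hasDerivAt_cubic _ _ _ _ x).deriv

theorem pdx_pdx_of_cubic_in_x (hu : ∀ x y, u x y = a y + b y * x + c y * x ^ 2 + d y * x ^ 3)
    (x y : ℝ) : pdx (pdx u) x y = 2 * c y + 6 * d y * x := by
  have hux : ∀ x y, pdx u x y = b y + (2 * c y) * x + (3 * d y) * x ^ 2 + 0 * x ^ 3 :=
    fun x y => by rw [pdx_of_cubic_in_x hu]; ring
  rw [pdx_of_cubic_in_x hux]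
  ring

theorem pdy_of_cubic_in_y (hu : ∀ x y, u x y = a x + b x * y + c x * y ^ 2 + d x * y ^ 3)
    (x y : ℝ) : pdy u x y = b x + 2 * c x * y + 3 * d x * y ^ 2 := by
  simp only [pdy, hu]
  exact (hasDerivAt_cubic _ _ _ _ y).deriv

theorem pdy_pdy_of_cubic_in_y (hu : ∀ x y, u x y = a x + b x * y + c x * y ^ 2 + d x * y ^ 3)
    (x y : ℝ) : pdy (pdy u) x y = 2 * c x + 6 * d x * y := by
  have huy : ∀ x y, pdy u x y = b x + (2 * c x) * y + (3 * d x) * y ^ 2 + 0 * y ^ 3 :=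
    fun x y => by rw [pdy_of_cubic_in_y hu]; ring
  rw [pdy_of_cubic_in_y huy]
  ring

end CubicInOneVariable

theorem sum_monomials_of_total_degree_le_three (c : ℕ → ℕ → ℝ) (x y : ℝ) :
    ∑ k₁ ∈ Finset.range 4, ∑ k₂ ∈ Finset.range 4,
        (if k₁ + k₂ ≤ 3 then c k₁ k₂ * x ^ k₁ * y ^ k₂ else 0)
      = (c 0 0 + c 0 1 * y + c 0 2 * y ^ 2 + c 0 3 * y ^ 3)
        + (c 1 0 + c 1 1 * y + c 1 2 * y ^ 2) * x
        + (c 2 0 + c 2 1 * y) * x ^ 2 + c 3 0 * x ^ 3 := by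
  simp only [Finset.sum_range_succ, Finset.sum_range_zero, Nat.reduceAdd, Nat.reduceLeDiff,
    ite_true, ite_false]
  ring

/-- Exactness of the super-third boundary stencil on polynomials of total degree ≤ 3,
with `f = Δu` and `g(y) = −u_x(0,y)`. -/
theorem super_third_boundary_stencil_exact_on_cubics (u : ℝ → ℝ → ℝ) (c : ℕ → ℕ → ℝ)
    (hu : ∀ x y : ℝ, u x y =
      ∑ k₁ ∈ Finset.range 4, ∑ k₂ ∈ Finset.range 4,
        if k₁ + k₂ ≤ 3 then c k₁ k₂ * x ^ k₁ * y ^ k₂ else 0)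
    (f : ℝ → ℝ → ℝ) (hf : ∀ x y : ℝ, f x y = pdx (pdx u) x y + pdy (pdy u) x y)
    (g : ℝ → ℝ) (hg : ∀ y : ℝ, g y = -pdx u 0 y)
    (h : ℝ) (hh : 0 < h) (y : ℝ) :
    (1 / (6 * h ^ 2)) *
        (4 * u 0 (y - h) + 2 * u h (y - h) - 20 * u 0 y + 8 * u h y
          + 4 * u 0 (y + h) + 2 * u h (y + h))
      = (1 / 6) * (4 * f 0 y + 2 * f h y) - (2 / h) * g y := by
  have hu_x : ∀ x y, u x y = (c 0 0 + c 0 1 * y + c 0 2 * y ^ 2 + c 0 3 * y ^ 3)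
      + (c 1 0 + c 1 1 * y + c 1 2 * y ^ 2) * x + (c 2 0 + c 2 1 * y) * x ^ 2
      + c 3 0 * x ^ 3 := fun x y => (hu x y).trans (sum_monomials_of_total_degree_le_three c x y)
  have hu_y : ∀ x y, u x y = (c 0 0 + c 1 0 * x + c 2 0 * x ^ 2 + c 3 0 * x ^ 3)
      + (c 0 1 + c 1 1 * x + c 2 1 * x ^ 2) * y + (c 0 2 + c 1 2 * x) * y ^ 2
      + c 0 3 * y ^ 3 := fun x y => by rw [hu_x]; ring
  rw [hf, hf, hg, pdx_pdx_of_cubic_in_x hu_x, pdx_pdx_of_cubic_in_x hu_x,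
    pdy_pdy_of_cubic_in_y hu_y, pdy_pdy_of_cubic_in_y hu_y, pdx_of_cubic_in_x hu_x]
  simp only [hu_x]
  field_simp
  ring
end

section
/- Sign/M-matrix structure of the super-third boundary stencil: for h > 0, K ≤ 0, σ ≥ 0, and λ = 6 − Kh² (so λ ≥ 6), the super-third coefficients α_{0,±1} = (4−Kh²)/(λh²), α_{1,±1} = 2/(λh²), α_{1,0} = 8/(λh²) are all positive, the center coefficient α_{0,0} = (2σKh³ + (λ+2)Kh² − 12σh − 20)/(λh²) is negative, and the row sum Σα equals K + σγ₀ where γ₀ = −2/h, i.e. the row is weakly diagonally dominant: |α_{0,0}| ≥ Σ_{(i,j)≠(0,0)} α_{i,j}. -/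
/-- Sign / M-matrix structure of the super-third boundary stencil. -/
theorem super_third_boundary_stencil_signs (h K σ lam : ℝ)
    (hh : 0 < h) (hK : K ≤ 0) (hσ : 0 ≤ σ) (hlam : lam = 6 - K * h ^ 2) :
    0 < (4 - K * h ^ 2) / (lam * h ^ 2) ∧
    0 < 2 / (lam * h ^ 2) ∧
    0 < 8 / (lam * h ^ 2) ∧
    (2 * σ * K * h ^ 3 + (lam + 2) * K * h ^ 2 - 12 * σ * h - 20) / (lam * h ^ 2) < 0 ∧
    2 * ((4 - K * h ^ 2) / (lam * h ^ 2)) + 2 * (2 / (lam * h ^ 2)) + 8 / (lam * h ^ 2)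
        + (2 * σ * K * h ^ 3 + (lam + 2) * K * h ^ 2 - 12 * σ * h - 20) / (lam * h ^ 2)
      = K + σ * (-2 / h) ∧
    2 * ((4 - K * h ^ 2) / (lam * h ^ 2)) + 2 * (2 / (lam * h ^ 2)) + 8 / (lam * h ^ 2)
      ≤ |(2 * σ * K * h ^ 3 + (lam + 2) * K * h ^ 2 - 12 * σ * h - 20) / (lam * h ^ 2)| := by
  have hh2 : 0 < h ^ 2 := by positivity
  have hlampos : 0 < lam := by nlinarith
  have hden : 0 < lam * h ^ 2 := by positivity
  have hNneg : 2 * σ * K * h ^ 3 + (lam + 2) * K * h ^ 2 - 12 * σ * h - 20 < 0 := by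
    have hnk : 0 ≤ -K := neg_nonneg.2 hK
    have t1 : 2 * σ * K * h ^ 3 ≤ 0 := by
      nlinarith [mul_nonneg (mul_nonneg hσ hnk) (pow_pos hh 3).le]
    have t2 : (lam + 2) * K * h ^ 2 ≤ 0 := by
      nlinarith [mul_nonneg hnk hh2.le]
    nlinarith [mul_nonneg hσ hh.le]
  have hcenter : (2 * σ * K * h ^ 3 + (lam + 2) * K * h ^ 2 - 12 * σ * h - 20) / (lam * h ^ 2) < 0 :=
    div_neg_of_neg_of_pos hNneg hden
  have hsum : 2 * ((4 - K * h ^ 2) / (lam * h ^ 2)) + 2 * (2 / (lam * h ^ 2)) + 8 / (lam * h ^ 2)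
        + (2 * σ * K * h ^ 3 + (lam + 2) * K * h ^ 2 - 12 * σ * h - 20) / (lam * h ^ 2)
      = K + σ * (-2 / h) := by
    subst hlam
    field_simp
    ring
  refine ⟨?_, by positivity, by positivity, hcenter, hsum, ?_⟩
  · apply div_pos (by nlinarith) hden
  · rw [abs_of_neg hcenter]
    have hKle : K + σ * (-2 / h) ≤ 0 := by
      have h1 : 0 ≤ σ * (2 / h) := by positivity
      have h2 : σ * (-2 / h) = -(σ * (2 / h)) := by ring
      linarith
    linarith [hsum]
end

section
/- Exactness of the anisotropic interior scheme on quartic polynomials when K = 0 (zero advection): Let A₁₁ = A₂₂, A₁₂ be constants, u a polynomial of total degree at most 4, and f = A₁₁u_xx + 2A₁₂u_xy + A₁₁u_yy. Then for every h > 0 and every (x,y): Σ_{i,j∈{−1,0,1}} α_{ij} u(x+ih, y+jh) = Σ_{i,j} β_{ij} f(x+ih, y+jh), where (with λ = 12A₁₁) α is given by (5.7) with K = 0 and β by (5.8) with K = 0. -/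
open Finset

def monomialSum {ι κ : Type*} (s : Finset ι) (t : Finset κ) (a : ι → κ → ℝ) (p : ι → ℕ)
    (q : κ → ℕ) : ℝ → ℝ → ℝ :=
  fun x y => ∑ i ∈ s, ∑ j ∈ t, a i j * x ^ p i * y ^ q j

section MonomialSum

variable {ι κ : Type*} (s : Finset ι) (t : Finset κ) (a : ι → κ → ℝ) (p : ι → ℕ) (q : κ → ℕ)

theorem pdx_monomialSum :
    pdx (monomialSum s t a p q) =
      monomialSum s t (fun i j => a i j * p i) (fun i => p i - 1) q := by
  funext x y
  refine (HasDerivAt.fun_sum fun i _ => HasDerivAt.fun_sum fun j _ => ?_).deriv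
  exact (((hasDerivAt_pow (p i) x).const_mul (a i j)).mul_const (y ^ q j)).congr_deriv (by ring)

theorem pdy_monomialSum :
    pdy (monomialSum s t a p q) =
      monomialSum s t (fun i j => a i j * q j) p (fun j => q j - 1) := by
  funext x y
  refine (HasDerivAt.fun_sum fun i _ => HasDerivAt.fun_sum fun j _ => ?_).deriv
  exact ((hasDerivAt_pow (q j) y).const_mul (a i j * x ^ p i)).congr_deriv (by ring)

end MonomialSum

def bivariateQuartic (c : ℕ → ℕ → ℝ) : ℝ → ℝ → ℝ :=
  monomialSum (range 5) (range 5) (fun i j => if i + j ≤ 4 then c i j else 0) id id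

noncomputable def anisotropicDiffusion (A11 A12 : ℝ) (u : ℝ → ℝ → ℝ) : ℝ → ℝ → ℝ :=
  fun x y => A11 * pdx (pdx u) x y + 2 * A12 * pdy (pdx u) x y + A11 * pdy (pdy u) x y

/-- `λh² Σ αᵢⱼ u(x + ih, y + jh)` for the weights `α` of (5.7) with `K = 0`. -/
def diffusionStencil (A11 A12 : ℝ) (u : ℝ → ℝ → ℝ) (h x y : ℝ) : ℝ :=
  2 * (A11 + A12) * (A11 + 2 * A12) * (u (x + h) (y + h) + u (x - h) (y - h))
    + 2 * (A11 - 2 * A12) * (A11 - A12) * (u (x + h) (y - h) + u (x - h) (y + h))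
    + 8 * (A11 ^ 2 - A12 ^ 2) * (u (x + h) y + u (x - h) y + u x (y + h) + u x (y - h))
    - 8 * (5 * A11 ^ 2 - 2 * A12 ^ 2) * u x y

/-- `2λ Σ βᵢⱼ f(x + ih, y + jh)` for the weights `β` of (5.8) with `K = 0`. -/
def sourceStencil (A11 A12 : ℝ) (f : ℝ → ℝ → ℝ) (h x y : ℝ) : ℝ :=
  (A11 + A12) * (f (x + h) (y + h) + f (x - h) (y - h))
    + (A11 - A12) * (f (x + h) (y - h) + f (x - h) (y + h))
    + 20 * A11 * f x y

theorem two_mul_diffusionStencil_bivariateQuartic (A11 A12 : ℝ) (c : ℕ → ℕ → ℝ) (h x y : ℝ) :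
    2 * diffusionStencil A11 A12 (bivariateQuartic c) h x y =
      h ^ 2 * sourceStencil A11 A12 (anisotropicDiffusion A11 A12 (bivariateQuartic c)) h x y := by
  simp only [sourceStencil, anisotropicDiffusion, bivariateQuartic, pdx_monomialSum,
    pdy_monomialSum]
  simp only [diffusionStencil, monomialSum, id_eq, ite_mul, zero_mul, sum_range_succ, range_one,
    sum_singleton, add_zero, pow_zero, mul_one, Order.add_one_le_iff, pow_one, Nat.reduceLeDiff,
    add_le_iff_nonpos_left, nonpos_iff_eq_zero, zero_le, ↓reduceIte, Nat.ofNat_pos,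
    Nat.one_le_ofNat, Nat.one_lt_ofNat, Std.le_refl, one_ne_zero, Nat.reduceLT,
    Nat.not_ofNat_le_one, OfNat.ofNat_ne_zero, Nat.lt_add_one, lt_self_iff_false,
    CharP.cast_eq_zero, mul_zero, zero_tsub, Nat.cast_one, tsub_self, Nat.cast_ofNat,
    Nat.add_one_sub_one, zero_add, ite_self]
  ring

theorem one_div_mul_eq_of_two_mul_eq {K : Type*} [Field K] [CharZero K] {a b h : K} (hh : h ≠ 0)
    (hab : 2 * a = h ^ 2 * b) (lam : K) : 1 / (lam * h ^ 2) * a = 1 / (2 * lam) * b := by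
  rcases eq_or_ne lam 0 with rfl | hlam
  · simp
  · field_simp
    linear_combination hab

theorem anisotropic_interior_scheme_exact_on_quartics_general (u : ℝ → ℝ → ℝ) (c : ℕ → ℕ → ℝ)
    (hu : ∀ x y : ℝ, u x y =
      ∑ k₁ ∈ Finset.range 5, ∑ k₂ ∈ Finset.range 5,
        if k₁ + k₂ ≤ 4 then c k₁ k₂ * x ^ k₁ * y ^ k₂ else 0)
    (A11 A12 lam : ℝ)
    (f : ℝ → ℝ → ℝ)
    (hf : ∀ x y : ℝ, f x y = A11 * pdx (pdx u) x y + 2 * A12 * pdy (pdx u) x y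
        + A11 * pdy (pdy u) x y)
    (h : ℝ) (hh : 0 < h) (x y : ℝ) :
    (1 / (lam * h ^ 2)) *
        (2 * (A11 + A12) * (A11 + 2 * A12) * (u (x + h) (y + h) + u (x - h) (y - h))
          + 2 * (A11 - 2 * A12) * (A11 - A12) * (u (x + h) (y - h) + u (x - h) (y + h))
          + 8 * (A11 ^ 2 - A12 ^ 2) *
              (u (x + h) y + u (x - h) y + u x (y + h) + u x (y - h))
          - 8 * (5 * A11 ^ 2 - 2 * A12 ^ 2) * u x y)
      = (1 / (2 * lam)) *
          ((A11 + A12) * (f (x + h) (y + h) + f (x - h) (y - h))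
            + (A11 - A12) * (f (x + h) (y - h) + f (x - h) (y + h))
            + 20 * A11 * f x y) := by
  have hf' : f = anisotropicDiffusion A11 A12 u := funext₂ hf
  have hu' : u = bivariateQuartic c :=
    funext₂ fun x y => by simp only [hu, bivariateQuartic, monomialSum, id, ite_mul, zero_mul]
  subst hf' hu'
  exact one_div_mul_eq_of_two_mul_eq hh.ne'
    (two_mul_diffusionStencil_bivariateQuartic A11 A12 c h x y) lam

/-- Exactness of the anisotropic interior scheme (K = 0, zero advection, A₂₂ = A₁₁)
on polynomials of total degree ≤ 4, with `f = A₁₁u_xx + 2A₁₂u_xy + A₁₁u_yy`. -/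
theorem anisotropic_interior_scheme_exact_on_quartics (u : ℝ → ℝ → ℝ) (c : ℕ → ℕ → ℝ)
    (hu : ∀ x y : ℝ, u x y =
      ∑ k₁ ∈ Finset.range 5, ∑ k₂ ∈ Finset.range 5,
        if k₁ + k₂ ≤ 4 then c k₁ k₂ * x ^ k₁ * y ^ k₂ else 0)
    (A11 A12 lam : ℝ) (hA : A11 ≠ 0) (hlam : lam = 12 * A11)
    (f : ℝ → ℝ → ℝ)
    (hf : ∀ x y : ℝ, f x y = A11 * pdx (pdx u) x y + 2 * A12 * pdy (pdx u) x y
        + A11 * pdy (pdy u) x y)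
    (h : ℝ) (hh : 0 < h) (x y : ℝ) :
    (1 / (lam * h ^ 2)) *
        (2 * (A11 + A12) * (A11 + 2 * A12) * (u (x + h) (y + h) + u (x - h) (y - h))
          + 2 * (A11 - 2 * A12) * (A11 - A12) * (u (x + h) (y - h) + u (x - h) (y + h))
          + 8 * (A11 ^ 2 - A12 ^ 2) *
              (u (x + h) y + u (x - h) y + u x (y + h) + u x (y - h))
          - 8 * (5 * A11 ^ 2 - 2 * A12 ^ 2) * u x y)
      = (1 / (2 * lam)) *
          ((A11 + A12) * (f (x + h) (y + h) + f (x - h) (y - h))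
            + (A11 - A12) * (f (x + h) (y - h) + f (x - h) (y + h))
            + 20 * A11 * f x y) :=
  anisotropic_interior_scheme_exact_on_quartics_general u c hu A11 A12 lam f hf h hh x y
end

section
/- Exactness of the 3D Poisson-Robin boundary stencil on quartic polynomials: Let u be a polynomial in (x,y,z) of total degree at most 4, f = Δu, σ ∈ ℝ, and g(y,z) = −u_x(0,y,z) + σ u(0,y,z). Then for all h > 0 and all (y,z): (1/(6h²))[u(0,y−h,z−h)+u(0,y−h,z+h)+u(0,y+h,z−h)+u(0,y+h,z+h) + 2(u(0,y−h,z)+u(0,y+h,z)+u(0,y,z−h)+u(0,y,z+h)) − 12(2+σh)·u(0,y,z)/h·h + 2(u(h,y−h,z)+u(h,y+h,z)+u(h,y,z−h)+u(h,y,z+h)) + 4u(h,y,z)] = (1/12)[f(0,y−h,z)+f(0,y+h,z)+f(0,y,z−h)+f(0,y,z+h) + 6f(0,y,z) − f(−h,y,z) + 3f(h,y,z)] − (2/h)g(y,z), where the center α coefficient is −12(2+σ h)/(6h²) (equals −(24+12σh)/(6h²)). -/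
noncomputable def pdx3 (u : ℝ → ℝ → ℝ → ℝ) : ℝ → ℝ → ℝ → ℝ :=
  fun x y z => deriv (fun s => u s y z) x
noncomputable def pdy3 (u : ℝ → ℝ → ℝ → ℝ) : ℝ → ℝ → ℝ → ℝ :=
  fun x y z => deriv (fun t => u x t z) y
noncomputable def pdz3 (u : ℝ → ℝ → ℝ → ℝ) : ℝ → ℝ → ℝ → ℝ :=
  fun x y z => deriv (fun r => u x y r) z

/-! Both sides of the identity are linear in `u`, and `u`, `Δu` and the Robin datum `g` are
obtained coefficientwise from the monomials of `u`. So it suffices to check the identity on each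
of the 35 monomials `x^p y^q z^r` with `p + q + r ≤ 4`, a finite check of polynomial identities
in `h, y, z, σ`. -/

open Finset

def monomial3 (p q r : ℕ) (x y z : ℝ) : ℝ := x ^ p * y ^ q * z ^ r

-- For `p < 2` the truncated exponent `p - 2` is harmless: its coefficient `p * (p - 1)` is `0`.
def laplacianMonomial3 (p q r : ℕ) (x y z : ℝ) : ℝ :=
  (p * (p - 1 : ℕ) : ℝ) * monomial3 (p - 2) q r x y z
    + (q * (q - 1 : ℕ) : ℝ) * monomial3 p (q - 2) r x y z
    + (r * (r - 1 : ℕ) : ℝ) * monomial3 p q (r - 2) x y z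

section MonomialDerivatives

variable (p q r : ℕ) (x y z : ℝ)

theorem hasDerivAt_monomial3_x :
    HasDerivAt (fun s => monomial3 p q r s y z) (p * monomial3 (p - 1) q r x y z) x :=
  (((hasDerivAt_pow p x).mul_const _).mul_const _).congr_deriv (by unfold monomial3; ring)

theorem hasDerivAt_monomial3_y :
    HasDerivAt (fun s => monomial3 p q r x s z) (q * monomial3 p (q - 1) r x y z) y :=
  (((hasDerivAt_pow q y).const_mul _).mul_const _).congr_deriv (by unfold monomial3; ring)

theorem hasDerivAt_monomial3_z :
    HasDerivAt (fun s => monomial3 p q r x y s) (r * monomial3 p q (r - 1) x y z) z :=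
  ((hasDerivAt_pow r z).const_mul _).congr_deriv (by unfold monomial3; ring)

end MonomialDerivatives

section PolynomialDerivatives

variable {ι : Type*} (S : Finset ι) (a : ι → ℝ) (p q r : ι → ℕ)

theorem pdx3_sum_monomial3 :
    pdx3 (fun x y z => ∑ i ∈ S, a i * monomial3 (p i) (q i) (r i) x y z) =
      fun x y z => ∑ i ∈ S, a i * p i * monomial3 (p i - 1) (q i) (r i) x y z := by
  funext x y z
  exact HasDerivAt.deriv <| HasDerivAt.fun_sum fun i _ =>
    ((hasDerivAt_monomial3_x _ _ _ x y z).const_mul (a i)).congr_deriv (mul_assoc ..).symm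

theorem pdy3_sum_monomial3 :
    pdy3 (fun x y z => ∑ i ∈ S, a i * monomial3 (p i) (q i) (r i) x y z) =
      fun x y z => ∑ i ∈ S, a i * q i * monomial3 (p i) (q i - 1) (r i) x y z := by
  funext x y z
  exact HasDerivAt.deriv <| HasDerivAt.fun_sum fun i _ =>
    ((hasDerivAt_monomial3_y _ _ _ x y z).const_mul (a i)).congr_deriv (mul_assoc ..).symm

theorem pdz3_sum_monomial3 :
    pdz3 (fun x y z => ∑ i ∈ S, a i * monomial3 (p i) (q i) (r i) x y z) =
      fun x y z => ∑ i ∈ S, a i * r i * monomial3 (p i) (q i) (r i - 1) x y z := by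
  funext x y z
  exact HasDerivAt.deriv <| HasDerivAt.fun_sum fun i _ =>
    ((hasDerivAt_monomial3_z _ _ _ x y z).const_mul (a i)).congr_deriv (mul_assoc ..).symm

theorem laplacian_sum_monomial3 (x y z : ℝ) :
    let u := fun x y z => ∑ i ∈ S, a i * monomial3 (p i) (q i) (r i) x y z
    pdx3 (pdx3 u) x y z + pdy3 (pdy3 u) x y z + pdz3 (pdz3 u) x y z =
      ∑ i ∈ S, a i * laplacianMonomial3 (p i) (q i) (r i) x y z := by
  simp only [pdx3_sum_monomial3, pdy3_sum_monomial3, pdz3_sum_monomial3, ← sum_add_distrib,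
    laplacianMonomial3, Nat.sub_sub]
  exact sum_congr rfl fun i _ => by push_cast; ring

theorem robinDatum_sum_monomial3 (σ y z : ℝ) :
    let u := fun x y z => ∑ i ∈ S, a i * monomial3 (p i) (q i) (r i) x y z;
    -pdx3 u 0 y z + σ * u 0 y z =
      ∑ i ∈ S, a i * (-(p i * monomial3 (p i - 1) (q i) (r i) 0 y z)
        + σ * monomial3 (p i) (q i) (r i) 0 y z) := by
  simp only [pdx3_sum_monomial3, mul_sum, ← sum_neg_distrib, ← sum_add_distrib]
  exact sum_congr rfl fun i _ => by ring

end PolynomialDerivatives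

noncomputable def robinStencil (σ h : ℝ) (u : ℝ → ℝ → ℝ → ℝ) (y z : ℝ) : ℝ :=
  (1 / (6 * h ^ 2)) *
    (u 0 (y - h) (z - h) + u 0 (y - h) (z + h) + u 0 (y + h) (z - h)
      + u 0 (y + h) (z + h)
      + 2 * (u 0 (y - h) z + u 0 (y + h) z + u 0 y (z - h) + u 0 y (z + h))
      - 12 * (2 + σ * h) * u 0 y z
      + 2 * (u h (y - h) z + u h (y + h) z + u h y (z - h) + u h y (z + h))
      + 4 * u h y z)

noncomputable def robinLoad (h : ℝ) (f : ℝ → ℝ → ℝ → ℝ) (g : ℝ → ℝ → ℝ) (y z : ℝ) : ℝ :=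
  (1 / 12) *
      (f 0 (y - h) z + f 0 (y + h) z + f 0 y (z - h) + f 0 y (z + h)
        + 6 * f 0 y z - f (-h) y z + 3 * f h y z)
    - (2 / h) * g y z

section Linearity

variable {ι : Type*} (S : Finset ι) (a : ι → ℝ)

theorem robinStencil_sum (σ h : ℝ) (u : ι → ℝ → ℝ → ℝ → ℝ) (y z : ℝ) :
    robinStencil σ h (fun x y z => ∑ i ∈ S, a i * u i x y z) y z =
      ∑ i ∈ S, a i * robinStencil σ h (u i) y z := by
  simp only [robinStencil, mul_sum, ← sum_add_distrib, ← sum_sub_distrib]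
  exact sum_congr rfl fun i _ => by ring

theorem robinLoad_sum (h : ℝ) (f : ι → ℝ → ℝ → ℝ → ℝ) (g : ι → ℝ → ℝ → ℝ) (y z : ℝ) :
    robinLoad h (fun x y z => ∑ i ∈ S, a i * f i x y z) (fun y z => ∑ i ∈ S, a i * g i y z) y z =
      ∑ i ∈ S, a i * robinLoad h (f i) (g i) y z := by
  simp only [robinLoad, mul_sum, ← sum_add_distrib, ← sum_sub_distrib]
  exact sum_congr rfl fun i _ => by ring

end Linearity

theorem robinStencil_monomial3 (σ : ℝ) {h : ℝ} (hh : h ≠ 0) (y z : ℝ) {p q r : ℕ}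
    (hdeg : p + q + r ≤ 4) :
    robinStencil σ h (monomial3 p q r) y z =
      robinLoad h (laplacianMonomial3 p q r)
        (fun y z => -(p * monomial3 (p - 1) q r 0 y z) + σ * monomial3 p q r 0 y z) y z := by
  have hp : p ≤ 4 := by omega
  have hq : q ≤ 4 := by omega
  have hr : r ≤ 4 := by omega
  unfold robinStencil robinLoad laplacianMonomial3 monomial3
  field_simp
  interval_cases p <;> interval_cases q <;> interval_cases r <;> first | omega | (norm_num; ring)

def quarticExponents : Finset (ℕ × ℕ × ℕ) :=
  (range 5 ×ˢ range 5 ×ˢ range 5).filter fun i => i.1 + i.2.1 + i.2.2 ≤ 4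

theorem sum_range_ite_eq_sum_quarticExponents (c : ℕ → ℕ → ℕ → ℝ) (x y z : ℝ) :
    ∑ k₁ ∈ range 5, ∑ k₂ ∈ range 5, ∑ k₃ ∈ range 5,
        (if k₁ + k₂ + k₃ ≤ 4 then c k₁ k₂ k₃ * x ^ k₁ * y ^ k₂ * z ^ k₃ else 0) =
      ∑ i ∈ quarticExponents, c i.1 i.2.1 i.2.2 * monomial3 i.1 i.2.1 i.2.2 x y z := by
  simp only [quarticExponents, sum_filter, sum_product, monomial3, mul_assoc]

/-- Exactness of the 3D Poisson–Robin boundary stencil on polynomials of total degree ≤ 4,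
with `f = Δu` and `g(y,z) = −u_x(0,y,z) + σ u(0,y,z)`. -/
theorem poisson_robin_3d_boundary_stencil_exact (u : ℝ → ℝ → ℝ → ℝ) (c : ℕ → ℕ → ℕ → ℝ)
    (hu : ∀ x y z : ℝ, u x y z =
      ∑ k₁ ∈ Finset.range 5, ∑ k₂ ∈ Finset.range 5, ∑ k₃ ∈ Finset.range 5,
        if k₁ + k₂ + k₃ ≤ 4 then c k₁ k₂ k₃ * x ^ k₁ * y ^ k₂ * z ^ k₃ else 0)
    (σ : ℝ)
    (f : ℝ → ℝ → ℝ → ℝ)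
    (hf : ∀ x y z : ℝ, f x y z
        = pdx3 (pdx3 u) x y z + pdy3 (pdy3 u) x y z + pdz3 (pdz3 u) x y z)
    (g : ℝ → ℝ → ℝ)
    (hg : ∀ y z : ℝ, g y z = -pdx3 u 0 y z + σ * u 0 y z)
    (h : ℝ) (hh : 0 < h) (y z : ℝ) :
    (1 / (6 * h ^ 2)) *
        (u 0 (y - h) (z - h) + u 0 (y - h) (z + h) + u 0 (y + h) (z - h)
          + u 0 (y + h) (z + h)
          + 2 * (u 0 (y - h) z + u 0 (y + h) z + u 0 y (z - h) + u 0 y (z + h))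
          - 12 * (2 + σ * h) * u 0 y z
          + 2 * (u h (y - h) z + u h (y + h) z + u h y (z - h) + u h y (z + h))
          + 4 * u h y z)
      = (1 / 12) *
          (f 0 (y - h) z + f 0 (y + h) z + f 0 y (z - h) + f 0 y (z + h)
            + 6 * f 0 y z - f (-h) y z + 3 * f h y z)
        - (2 / h) * g y z := by
  show robinStencil σ h u y z = robinLoad h f g y z
  set a : ℕ × ℕ × ℕ → ℝ := fun i => c i.1 i.2.1 i.2.2
  obtain rfl : u = fun x y z => ∑ i ∈ quarticExponents, a i * monomial3 i.1 i.2.1 i.2.2 x y z :=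
    funext₃ fun x y z => (hu x y z).trans (sum_range_ite_eq_sum_quarticExponents c x y z)
  obtain rfl : f = fun x y z =>
      ∑ i ∈ quarticExponents, a i * laplacianMonomial3 i.1 i.2.1 i.2.2 x y z :=
    funext₃ fun x y z => (hf x y z).trans (laplacian_sum_monomial3 _ _ _ _ _ x y z)
  obtain rfl : g = fun y z => ∑ i ∈ quarticExponents, a i *
      (-(i.1 * monomial3 (i.1 - 1) i.2.1 i.2.2 0 y z) + σ * monomial3 i.1 i.2.1 i.2.2 0 y z) :=
    funext₂ fun y z => (hg y z).trans (robinDatum_sum_monomial3 _ _ _ _ _ σ y z)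
  rw [robinStencil_sum, robinLoad_sum]
  exact sum_congr rfl fun i hi =>
    congrArg (a i * ·) (robinStencil_monomial3 σ hh.ne' y z (mem_filter.1 hi).2)
end

section
/- If A is an n×n real matrix that is irreducibly weakly diagonally dominant with at least one row strictly diagonally dominant, has positive diagonal entries and nonpositive off-diagonal entries, and is symmetric, then A is positive definite. -/
/-!
For symmetric `A` the quadratic form splits as
`xᵀ A x = ∑ᵢ (∑ⱼ Aᵢⱼ) xᵢ² + ½ ∑ᵢ ∑ⱼ (-Aᵢⱼ) (xᵢ - xⱼ)²`.
With nonpositive off-diagonal entries, weak diagonal dominance makes every row sum, hence every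
term, nonnegative. If the form vanishes at `x`, then `x` is constant along the nonzero entries
of `A`, hence constant by irreducibility, and vanishes at a strictly dominant row.
-/

open Finset Matrix Relation

namespace Matrix

variable {ι : Type*} [Fintype ι] {A : Matrix ι ι ℝ}

theorem dotProduct_mulVec_self_of_isSymm (hA : A.IsSymm) (x : ι → ℝ) :
    x ⬝ᵥ A *ᵥ x =
      ∑ i, (∑ j, A i j) * x i ^ 2 + (∑ i, ∑ j, -A i j * (x i - x j) ^ 2) / 2 := by
  have hswap : ∑ i, ∑ j, A i j * x j ^ 2 = ∑ i, ∑ j, A i j * x i ^ 2 := by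
    rw [Finset.sum_comm]
    simp_rw [hA.apply]
  have hexpand : ∑ i, ∑ j, -A i j * (x i - x j) ^ 2 =
      2 * ∑ i, ∑ j, x i * (A i j * x j) - ∑ i, ∑ j, A i j * x i ^ 2
        - ∑ i, ∑ j, A i j * x j ^ 2 := by
    simp only [Finset.mul_sum, ← Finset.sum_sub_distrib]
    exact Finset.sum_congr rfl fun i _ => Finset.sum_congr rfl fun j _ => by ring
  have hdot : x ⬝ᵥ A *ᵥ x = ∑ i, ∑ j, x i * (A i j * x j) := by
    simp only [dotProduct, mulVec, Finset.mul_sum]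
  have hrow : ∑ i, (∑ j, A i j) * x i ^ 2 = ∑ i, ∑ j, A i j * x i ^ 2 := by
    simp only [Finset.sum_mul]
  linarith

theorem sum_row_eq_diag_sub_sum_abs [DecidableEq ι] {i : ι}
    (hoff : ∀ j, i ≠ j → A i j ≤ 0) :
    ∑ j, A i j = A i i - ∑ j ∈ univ.erase i, |A i j| := by
  rw [← Finset.add_sum_erase _ _ (mem_univ i)]
  have : ∑ j ∈ univ.erase i, |A i j| = -∑ j ∈ univ.erase i, A i j := by
    rw [← Finset.sum_neg_distrib]
    exact Finset.sum_congr rfl fun j hj => abs_of_nonpos (hoff j (ne_of_mem_erase hj).symm)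
  linarith

theorem posDef_of_isSymm_of_sum_row_nonneg (hA : A.IsSymm)
    (hoff : ∀ i j, i ≠ j → A i j ≤ 0) (hrow : ∀ i, 0 ≤ ∑ j, A i j)
    {k : ι} (hk : 0 < ∑ j, A k j) (hreach : ∀ i, ReflTransGen (fun a b => A a b ≠ 0) i k) :
    A.PosDef := by
  refine posDef_iff_dotProduct_mulVec.2 ⟨isHermitian_iff_isSymm.2 hA, fun x hx => ?_⟩
  rw [star_trivial, dotProduct_mulVec_self_of_isSymm hA]
  have hdiag_terms : ∀ i ∈ univ, 0 ≤ (∑ j, A i j) * x i ^ 2 :=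
    fun i _ => mul_nonneg (hrow i) (sq_nonneg _)
  have hedge_term : ∀ i j, 0 ≤ -A i j * (x i - x j) ^ 2 := by
    intro i j
    rcases eq_or_ne i j with rfl | hij
    · simp
    · exact mul_nonneg (neg_nonneg.2 (hoff i j hij)) (sq_nonneg _)
  have hedge_terms : ∀ i ∈ univ, 0 ≤ ∑ j, -A i j * (x i - x j) ^ 2 :=
    fun i _ => sum_nonneg fun j _ => hedge_term i j
  have hD := sum_nonneg hdiag_terms
  have hE := sum_nonneg hedge_terms
  by_contra! hle
  have hconst : ∀ a b, A a b ≠ 0 → x a = x b := by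
    intro a b hab
    have hrow_a := (sum_eq_zero_iff_of_nonneg hedge_terms).1 (by linarith) a (mem_univ a)
    have := (sum_eq_zero_iff_of_nonneg fun j _ => hedge_term a j).1 hrow_a b (mem_univ b)
    simpa [hab, sub_eq_zero] using this
  have hxk : x k = 0 := by
    have := (sum_eq_zero_iff_of_nonneg hdiag_terms).1 (by linarith) k (mem_univ k)
    simpa [hk.ne'] using this
  have hxi : ∀ i, x i = x k := fun i => by
    simpa only [reflTransGen_eq_self] using (hreach i).lift x hconst
  exact hx (funext fun i => (hxi i).trans hxk)

end Matrix

/-- A symmetric, irreducibly weakly diagonally dominant matrix (with at least one row of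
strict dominance), positive diagonal and nonpositive off-diagonal entries, is positive
definite. -/
theorem symm_irr_diag_dominant_M_matrix_posDef (n : ℕ) (A : Matrix (Fin n) (Fin n) ℝ)
    (hdiag : ∀ i, 0 < A i i)
    (hoff : ∀ i j, i ≠ j → A i j ≤ 0)
    (hwdd : ∀ i, ∑ j ∈ Finset.univ.erase i, |A i j| ≤ |A i i|)
    (hstrict : ∃ k, ∑ j ∈ Finset.univ.erase k, |A k j| < |A k k|)
    (hirr : ∀ i j : Fin n, i ≠ j → Relation.TransGen (fun a b => A a b ≠ 0) i j)
    (hsym : A.IsSymm) :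
    A.PosDef := by
  have hrow_slack : ∀ i, ∑ j, A i j = |A i i| - ∑ j ∈ univ.erase i, |A i j| := fun i => by
    rw [abs_of_pos (hdiag i)]
    exact sum_row_eq_diag_sub_sum_abs (hoff i)
  obtain ⟨k, hk⟩ := hstrict
  refine posDef_of_isSymm_of_sum_row_nonneg hsym hoff
    (fun i => by linarith [hrow_slack i, hwdd i]) (k := k) (by linarith [hrow_slack k])
    fun i => ?_
  rcases eq_or_ne i k with rfl | hik
  · exact .refl
  · exact (hirr i k hik).to_reflTransGen
end
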